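/- Let T > 0 and r' > r > 0. Then there is no constant C > 0 such that every solution u of the heat equation with initial datum in L²(ℝⁿ) satisfies ∫_{B_{r'}} u(T,x)² dx ≤ C ∫_0^T ∫_{B_r} u(t,x)² dx dt. Equivalently, for every C > 0 there exists u₀ ∈ L²(ℝⁿ) whose heat-equation solution u violates this inequality; indeed the translated Gaussians u_k(t,x) = (4π(t+1))^{−n/2} exp(−(|x₁−k|² + |x'|²)/(4(t+1))) satisfy ∫_0^T ∫_{B_r} u_k² dx dt / ∫_{B_{r'}} u_k(T,·)² dx → 0 as k → ∞. -/

import Mathlib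

/-! Completing the square gives the semigroup law `∫ G_t(x - y) G_s(y - c) dy = G_{t+s}(x - c)`
for the heat kernel `G`, so the translated Gaussian `u_k(t) = G_{t+1}(· - k e₁)` is the solution
with the `L²` datum `u_k(0)`.
On `(0,T) × B_r` we have `|x - k e₁| ≥ k - r`, so
`u_k ≤ (4π)^{-n/2} exp(-(k - r)²/(4(T+1)))`; on the ball of radius `ε` around `(r + 2ε) e₁`,
which lies in `B_{r'}` once `r + 3ε ≤ r'`, we have `|x - k e₁| ≤ k - r - ε`, so
`u_k(T) ≥ (4π(T+1))^{-n/2} exp(-(k - r - ε)²/(4(T+1)))`.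
The quotient of the squared bounds decays like `exp(-ε k/(T+1))`, so the ratio of the two
integrals tends to `0`, which no observability constant `C` allows. -/

open MeasureTheory Real Set Filter

noncomputable section

/-- The solution of the heat equation `∂ₜu − Δu = 0` with initial datum `u₀`,
given by convolution with the heat kernel. -/
def heatSol (n : ℕ) (u₀ : EuclideanSpace ℝ (Fin n) → ℝ) (t : ℝ)
    (x : EuclideanSpace ℝ (Fin n)) : ℝ :=
  ∫ y, (4 * π * t) ^ (-(n : ℝ) / 2) * Real.exp (-‖x - y‖ ^ 2 / (4 * t)) * u₀ y

/-- The translated Gaussian solution `u_k(t,x) = (4π(t+1))^{-n/2}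
exp(−|x − k e₁|²/(4(t+1)))`, where `e₁` is the first coordinate vector. -/
def gaussSol (n : ℕ) (hn : 0 < n) (k : ℕ) (t : ℝ) (x : EuclideanSpace ℝ (Fin n)) : ℝ :=
  (4 * π * (t + 1)) ^ (-(n : ℝ) / 2) *
    Real.exp (-‖x - (k : ℝ) • EuclideanSpace.single (⟨0, hn⟩ : Fin n) (1 : ℝ)‖ ^ 2 /
      (4 * (t + 1)))

open Topology

def heatKernel (n : ℕ) (t : ℝ) (x : EuclideanSpace ℝ (Fin n)) : ℝ :=
  (4 * π * t) ^ (-(n : ℝ) / 2) * exp (-‖x‖ ^ 2 / (4 * t))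

section HeatKernel

variable {n : ℕ} {s t : ℝ}

theorem heatSol_eq_integral_heatKernel (u₀ : EuclideanSpace ℝ (Fin n) → ℝ) (t : ℝ)
    (x : EuclideanSpace ℝ (Fin n)) :
    heatSol n u₀ t x = ∫ y, heatKernel n t (x - y) * u₀ y :=
  rfl

theorem gaussSol_eq_heatKernel (hn : 0 < n) (k : ℕ) (t : ℝ) (x : EuclideanSpace ℝ (Fin n)) :
    gaussSol n hn k t x =
      heatKernel n (t + 1) (x - (k : ℝ) • EuclideanSpace.single (⟨0, hn⟩ : Fin n) (1 : ℝ)) :=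
  rfl

theorem heatKernel_pos (hs : 0 < s) (x : EuclideanSpace ℝ (Fin n)) : 0 < heatKernel n s x := by
  unfold heatKernel; positivity

theorem heatKernel_le (hs : 0 < s) (x : EuclideanSpace ℝ (Fin n)) :
    heatKernel n s x ≤ (4 * π * s) ^ (-(n : ℝ) / 2) := by
  unfold heatKernel
  refine mul_le_of_le_one_right (by positivity) (exp_le_one_iff.2 ?_)
  exact div_nonpos_of_nonpos_of_nonneg (by simp) (by positivity)

theorem heatKernel_le_of_le_norm {S a : ℝ} (hs : 1 ≤ s) (hsS : s ≤ S) (ha : 0 ≤ a)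
    {x : EuclideanSpace ℝ (Fin n)} (hax : a ≤ ‖x‖) :
    heatKernel n s x ≤ (4 * π) ^ (-(n : ℝ) / 2) * exp (-a ^ 2 / (4 * S)) := by
  have hprefactor : (4 * π * s) ^ (-(n : ℝ) / 2) ≤ (4 * π) ^ (-(n : ℝ) / 2) :=
    rpow_le_rpow_of_nonpos (by positivity) (le_mul_of_one_le_right (by positivity) hs)
      (div_nonpos_of_nonpos_of_nonneg (by simp) zero_le_two)
  have hexponent : -‖x‖ ^ 2 / (4 * s) ≤ -a ^ 2 / (4 * S) := by
    rw [neg_div, neg_div, neg_le_neg_iff]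
    exact div_le_div₀ (by positivity) (pow_le_pow_left₀ ha hax 2) (by positivity) (by linarith)
  exact mul_le_mul hprefactor (exp_le_exp.2 hexponent) (exp_nonneg _) (by positivity)

theorem le_heatKernel_of_norm_le {a : ℝ} (hs : 0 < s) {x : EuclideanSpace ℝ (Fin n)}
    (hxa : ‖x‖ ≤ a) :
    (4 * π * s) ^ (-(n : ℝ) / 2) * exp (-a ^ 2 / (4 * s)) ≤ heatKernel n s x := by
  unfold heatKernel
  gcongr

theorem continuous_heatKernel (n : ℕ) (s : ℝ) : Continuous (heatKernel n s) := by
  unfold heatKernel; fun_prop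

theorem integral_heatKernel (hs : 0 < s) : ∫ x, heatKernel n s x = 1 := by
  have hexp : ∀ x : EuclideanSpace ℝ (Fin n),
      exp (-‖x‖ ^ 2 / (4 * s)) = exp (-(4 * s)⁻¹ * ‖x‖ ^ 2) := fun x => by ring_nf
  simp only [heatKernel, hexp, integral_const_mul]
  rw [GaussianFourier.integral_rexp_neg_mul_sq_norm (by positivity), finrank_euclideanSpace_fin,
    div_inv_eq_mul, neg_div, rpow_neg (by positivity), show π * (4 * s) = 4 * π * s by ring]
  exact inv_mul_cancel₀ (by positivity)

theorem integrable_heatKernel (hs : 0 < s) : Integrable (heatKernel n s) :=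
  .of_integral_ne_zero (by rw [integral_heatKernel hs]; exact one_ne_zero)

theorem integrable_heatKernel_sq (hs : 0 < s) : Integrable (fun x => heatKernel n s x ^ 2) := by
  refine ((integrable_heatKernel hs).const_mul ((4 * π * s) ^ (-(n : ℝ) / 2))).mono'
    ((continuous_heatKernel n s).pow 2).aestronglyMeasurable (Eventually.of_forall fun x => ?_)
  rw [norm_pow, Real.norm_of_nonneg (heatKernel_pos hs x).le, sq]
  exact mul_le_mul_of_nonneg_right (heatKernel_le hs x) (heatKernel_pos hs x).le

theorem sq_norm_sub_div_add_sq_norm_div (ht : 0 < t) (hs : 0 < s)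
    (z y : EuclideanSpace ℝ (Fin n)) :
    ‖z - y‖ ^ 2 / (4 * t) + ‖y‖ ^ 2 / (4 * s) =
      ‖z‖ ^ 2 / (4 * (t + s)) +
        ‖y - (s / (t + s)) • z‖ ^ 2 / (4 * (t * s / (t + s))) := by
  rw [norm_sub_sq_real, norm_sub_sq_real, norm_smul, inner_smul_right, real_inner_comm,
    Real.norm_of_nonneg (by positivity)]
  field_simp
  ring

theorem heatKernel_mul_heatKernel (ht : 0 < t) (hs : 0 < s) (z y : EuclideanSpace ℝ (Fin n)) :
    heatKernel n t (z - y) * heatKernel n s y =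
      heatKernel n (t + s) z * heatKernel n (t * s / (t + s)) (y - (s / (t + s)) • z) := by
  have hconst :
      (4 * π * t) * (4 * π * s) = (4 * π * (t + s)) * (4 * π * (t * s / (t + s))) := by
    field_simp
  simp only [heatKernel, neg_div]
  calc _ = ((4 * π * t) * (4 * π * s)) ^ (-((n : ℝ) / 2)) *
          exp (-(‖z - y‖ ^ 2 / (4 * t) + ‖y‖ ^ 2 / (4 * s))) := by
        rw [mul_rpow (x := 4 * π * t) (by positivity) (by positivity), neg_add, exp_add]
        ring
    _ = _ := by
      rw [hconst, sq_norm_sub_div_add_sq_norm_div ht hs,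
        mul_rpow (x := 4 * π * (t + s)) (by positivity) (by positivity), neg_add, exp_add]
      ring

theorem integral_heatKernel_mul_heatKernel (ht : 0 < t) (hs : 0 < s)
    (x c : EuclideanSpace ℝ (Fin n)) :
    ∫ y, heatKernel n t (x - y) * heatKernel n s (y - c) = heatKernel n (t + s) (x - c) := by
  rw [← integral_add_right_eq_self _ c]
  simp_rw [add_sub_cancel_right, sub_add_eq_sub_sub_swap, heatKernel_mul_heatKernel ht hs,
    integral_const_mul, integral_sub_right_eq_self (heatKernel n _),
    integral_heatKernel (show 0 < t * s / (t + s) by positivity), mul_one]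

end HeatKernel

theorem tendsto_exp_neg_sq_div_exp_neg_sq {σ a b : ℝ} (hσ : 0 < σ) (hab : a < b) :
    Tendsto (fun x : ℝ => exp (-(x - a) ^ 2 / σ) / exp (-(x - b) ^ 2 / σ)) atTop (𝓝 0) := by
  have hslope : 2 * (a - b) / σ < 0 := div_neg_of_neg_of_pos (by linarith) hσ
  have hexponent :
      Tendsto (fun x : ℝ => 2 * (a - b) / σ * x + (b ^ 2 - a ^ 2) / σ) atTop atBot :=
    tendsto_atBot_add_const_right _ _ (tendsto_id.const_mul_atTop_of_neg hslope)
  refine (tendsto_exp_atBot.comp hexponent).congr fun x => ?_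
  rw [Function.comp_apply, ← exp_sub]
  congr 1
  field_simp
  ring

theorem norm_smul_single_one {n : ℕ} (i : Fin n) {a : ℝ} (ha : 0 ≤ a) :
    ‖a • EuclideanSpace.single i (1 : ℝ)‖ = a := by
  simp [norm_smul, abs_of_nonneg ha]

section GaussSol

variable {n : ℕ} (hn : 0 < n) (k : ℕ)

theorem heatSol_gaussSol {s t : ℝ} (hs : -1 < s) (ht : 0 < t) :
    heatSol n (gaussSol n hn k s) t = gaussSol n hn k (s + t) := by
  funext x
  simp only [heatSol_eq_integral_heatKernel, gaussSol_eq_heatKernel]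
  rw [integral_heatKernel_mul_heatKernel ht (by linarith), show t + (s + 1) = s + t + 1 by ring]

theorem continuous_gaussSol (t : ℝ) : Continuous (gaussSol n hn k t) :=
  (continuous_heatKernel n _).comp (continuous_sub_right _)

theorem integrable_gaussSol_sq {t : ℝ} (ht : -1 < t) :
    Integrable (fun x => gaussSol n hn k t x ^ 2) :=
  (integrable_heatKernel_sq (n := n) (by linarith)).comp_sub_right _

theorem memLp_gaussSol {t : ℝ} (ht : -1 < t) : MemLp (gaussSol n hn k t) 2 volume :=
  (memLp_two_iff_integrable_sq (continuous_gaussSol hn k t).aestronglyMeasurable).2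
    (integrable_gaussSol_sq hn k ht)

theorem setIntegral_ball_gaussSol_sq_pos {t r : ℝ} (ht : -1 < t) (hr : 0 < r) :
    0 < ∫ x in Metric.ball 0 r, gaussSol n hn k t x ^ 2 := by
  have hpos : ∀ x, 0 < gaussSol n hn k t x ^ 2 := fun x =>
    pow_pos (heatKernel_pos (by linarith) _) 2
  rw [setIntegral_pos_iff_support_of_nonneg_ae (Eventually.of_forall fun x => (hpos x).le)
    (integrable_gaussSol_sq hn k ht).integrableOn,
    Function.support_eq_univ fun x => (hpos x).ne', univ_inter]
  exact Metric.measure_ball_pos _ _ hr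

theorem setIntegral_Ioo_setIntegral_ball_gaussSol_sq_le {T r : ℝ} (hrk : r ≤ k) :
    ∫ t in Ioo (0 : ℝ) T, ∫ x in Metric.ball 0 r, gaussSol n hn k t x ^ 2 ≤
      ((4 * π) ^ (-(n : ℝ) / 2) * exp (-(k - r) ^ 2 / (4 * (T + 1)))) ^ 2 *
        volume.real (Metric.ball (0 : EuclideanSpace ℝ (Fin n)) r) *
          volume.real (Ioo (0 : ℝ) T) := by
  set e := EuclideanSpace.single (⟨0, hn⟩ : Fin n) (1 : ℝ)
  refine (le_norm_self _).trans
    (norm_setIntegral_le_of_norm_le_const measure_Ioo_lt_top fun t ht => ?_)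
  refine norm_setIntegral_le_of_norm_le_const measure_ball_lt_top fun x hx => ?_
  have ht1 : 0 < t + 1 := by linarith [ht.1]
  have hdist : k - r ≤ ‖x - (k : ℝ) • e‖ := by
    have := norm_sub_norm_le ((k : ℝ) • e) x
    rw [norm_smul_single_one _ k.cast_nonneg, norm_sub_rev] at this
    linarith [mem_ball_zero_iff.1 hx]
  have hbound := heatKernel_le_of_le_norm (s := t + 1) (S := T + 1) (by linarith [ht.1])
    (by linarith [ht.2]) (sub_nonneg.2 hrk) hdist
  rw [gaussSol_eq_heatKernel, norm_pow, norm_of_nonneg (heatKernel_pos ht1 _).le]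
  exact pow_le_pow_left₀ (heatKernel_pos ht1 _).le hbound 2

theorem le_setIntegral_ball_gaussSol_sq {T ρ ε r' : ℝ} (hT : -1 < T) (hρ : 0 ≤ ρ)
    (hρk : ρ ≤ k) (hρε : ρ + ε ≤ r') :
    ((4 * π * (T + 1)) ^ (-(n : ℝ) / 2) * exp (-(k - ρ + ε) ^ 2 / (4 * (T + 1)))) ^ 2 *
        volume.real
          (Metric.ball (ρ • EuclideanSpace.single (⟨0, hn⟩ : Fin n) (1 : ℝ)) ε) ≤
      ∫ x in Metric.ball 0 r', gaussSol n hn k T x ^ 2 := by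
  set e := EuclideanSpace.single (⟨0, hn⟩ : Fin n) (1 : ℝ)
  have hT1 : 0 < T + 1 := by linarith
  have hint := integrable_gaussSol_sq hn k hT
  have hsub : Metric.ball (ρ • e) ε ⊆ Metric.ball 0 r' :=
    Metric.ball_subset_ball' (by rwa [dist_zero_right, norm_smul_single_one _ hρ, add_comm])
  have hbound : ∀ x ∈ Metric.ball (ρ • e) ε,
      ((4 * π * (T + 1)) ^ (-(n : ℝ) / 2) * exp (-(k - ρ + ε) ^ 2 / (4 * (T + 1)))) ^ 2 ≤
        gaussSol n hn k T x ^ 2 := fun x hx => by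
    have hdist : ‖x - (k : ℝ) • e‖ ≤ k - ρ + ε := by
      have := norm_sub_le (x - ρ • e) (((k : ℝ) - ρ) • e)
      rw [sub_sub, ← add_smul, add_sub_cancel, norm_smul_single_one _ (sub_nonneg.2 hρk)] at this
      linarith [mem_ball_iff_norm.1 hx]
    exact pow_le_pow_left₀ (by positivity) (le_heatKernel_of_norm_le hT1 hdist) 2
  calc _ ≤ ∫ x in Metric.ball (ρ • e) ε, gaussSol n hn k T x ^ 2 :=
        setIntegral_ge_of_const_le_real measurableSet_ball measure_ball_lt_top.ne hbound
          hint.integrableOn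
    _ ≤ _ := setIntegral_mono_set hint.integrableOn
        (Eventually.of_forall fun x => sq_nonneg _) hsub.eventuallyLE

theorem tendsto_setIntegral_gaussSol_sq_div {T r r' : ℝ} (hT : 0 ≤ T) (hr : 0 ≤ r)
    (hrr' : r < r') :
    Tendsto (fun k : ℕ =>
        (∫ t in Ioo (0 : ℝ) T, ∫ x in Metric.ball 0 r, gaussSol n hn k t x ^ 2) /
          ∫ x in Metric.ball 0 r', gaussSol n hn k T x ^ 2) atTop (𝓝 0) := by
  obtain ⟨ε, hε, hεr'⟩ : ∃ ε : ℝ, 0 < ε ∧ r + 3 * ε ≤ r' :=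
    ⟨(r' - r) / 4, by linarith, by linarith⟩
  set A := (4 * π) ^ (-(n : ℝ) / 2)
  set B := (4 * π * (T + 1)) ^ (-(n : ℝ) / 2)
  set V := volume.real (Metric.ball (0 : EuclideanSpace ℝ (Fin n)) r) *
    volume.real (Ioo (0 : ℝ) T)
  set W := volume.real
    (Metric.ball ((r + 2 * ε) • EuclideanSpace.single (⟨0, hn⟩ : Fin n) (1 : ℝ)) ε)
  have hW : 0 < W :=
    ENNReal.toReal_pos (Metric.measure_ball_pos _ _ hε).ne' measure_ball_lt_top.ne
  have hgauss := (tendsto_exp_neg_sq_div_exp_neg_sq (σ := 4 * (T + 1)) (a := r) (b := r + ε)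
    (by positivity) (by linarith)).comp tendsto_natCast_atTop_atTop
  have hbound : Tendsto (fun k : ℕ => A ^ 2 * V / (B ^ 2 * W) *
      (exp (-(k - r) ^ 2 / (4 * (T + 1))) / exp (-(k - (r + ε)) ^ 2 / (4 * (T + 1)))) ^ 2)
      atTop (𝓝 0) := by
    simpa using (hgauss.pow 2).const_mul (A ^ 2 * V / (B ^ 2 * W))
  refine tendsto_of_tendsto_of_tendsto_of_le_of_le' tendsto_const_nhds hbound
    (Eventually.of_forall fun k => div_nonneg
      (integral_nonneg fun t => integral_nonneg fun x => sq_nonneg _)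
      (integral_nonneg fun x => sq_nonneg _)) ?_
  filter_upwards [eventually_ge_atTop ⌈r + 2 * ε⌉₊] with k hk
  have hlower := le_setIntegral_ball_gaussSol_sq hn k (T := T) (by linarith) (by positivity)
    (Nat.ceil_le.1 hk) (show r + 2 * ε + ε ≤ r' by linarith)
  have hupper := setIntegral_Ioo_setIntegral_ball_gaussSol_sq_le hn k (T := T) (r := r)
    (by linarith [Nat.ceil_le.1 hk])
  refine (div_le_div₀ (by positivity) hupper (by positivity) hlower).trans_eq ?_
  rw [show (k : ℝ) - (r + 2 * ε) + ε = k - (r + ε) by ring]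
  simp only [A, B, V, W]
  field_simp

end GaussSol

/-- There is no observability inequality recovering the solution on a larger ball
`B_{r'}` from observations on a smaller ball `B_r`; indeed the translated Gaussians
witness the failure. -/
theorem no_observability_larger_ball (n : ℕ) (hn : 0 < n)
    (T : ℝ) (hT : 0 < T) (r r' : ℝ) (hr : 0 < r) (hrr' : r < r') :
    (¬ ∃ C > (0:ℝ), ∀ u₀ : EuclideanSpace ℝ (Fin n) → ℝ, MemLp u₀ 2 volume →
      ∫ x in Metric.ball 0 r', heatSol n u₀ T x ^ 2 ≤
        C * ∫ t in Ioo (0:ℝ) T, ∫ x in Metric.ball 0 r, heatSol n u₀ t x ^ 2) ∧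
    Tendsto
      (fun k : ℕ =>
        (∫ t in Ioo (0:ℝ) T, ∫ x in Metric.ball 0 r, gaussSol n hn k t x ^ 2) /
          ∫ x in Metric.ball 0 r', gaussSol n hn k T x ^ 2)
      atTop (nhds 0) := by
  have hratio := tendsto_setIntegral_gaussSol_sq_div hn hT.le hr.le hrr'
  refine ⟨fun ⟨C, hC, hobs⟩ => ?_, hratio⟩
  obtain ⟨k, hk⟩ := (hratio.eventually_lt_const (inv_pos.2 hC)).exists
  have hobs_k := hobs (gaussSol n hn k 0) (memLp_gaussSol hn k neg_one_lt_zero)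
  rw [heatSol_gaussSol hn k neg_one_lt_zero hT, zero_add,
    setIntegral_congr_fun measurableSet_Ioo fun t ht => by
      rw [heatSol_gaussSol hn k neg_one_lt_zero ht.1, zero_add]] at hobs_k
  rw [div_lt_iff₀ (setIntegral_ball_gaussSol_sq_pos hn k (by linarith) (hr.trans hrr')),
    lt_inv_mul_iff₀ hC] at hk
  linarith
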